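/- arXiv:1110.1837 — 4 statements merged into one kernel-verified Lean document; each statement's English description precedes it below -/
import Mathlib

section
/- If f : ℝ → ℝ is continuous and satisfies f(v)·v ≥ -C + γ₀·|v|^{2+δ} for all v ∈ ℝ, where C ≥ 0, γ₀ > 0, δ > 0, then its antiderivative F(v) := ∫₀ᵛ f(s) ds satisfies F(v) ≥ -C₁ + γ₁·|v|^{2+δ} for all v ∈ ℝ, for some constants C₁ ≥ 0 and γ₁ > 0. -/
/-!
Beyond `s₀ = max 1 (2C/γ₀)` the dissipativity bound gives `f s ≥ (γ₀/2) s^(1+δ)`, whose integral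
grows like `s^(2+δ)`; on `[0, s₀]` the integral of `f` is bounded below by `-∫₀^{s₀} |f|`. The
negative half-line reduces to the positive one through `s ↦ -f (-s)`, which satisfies the same
condition.
-/

open MeasureTheory intervalIntegral

lemma half_mul_rpow_le_of_mul_ge {a s C γ δ : ℝ} (hγ : 0 < γ) (hδ : -1 ≤ δ)
    (hs : max 1 (2 * C / γ) ≤ s) (h : a * s ≥ -C + γ * s ^ (2 + δ)) :
    γ / 2 * s ^ (1 + δ) ≤ a := by
  have hs₁ : 1 ≤ s := (le_max_left _ _).trans hs
  have hs₀ : 0 < s := one_pos.trans_le hs₁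
  have hsplit : s ^ (2 + δ) = s ^ (1 + δ) * s := by
    rw [show 2 + δ = (1 + δ) + 1 by ring, Real.rpow_add hs₀, Real.rpow_one]
  have hpow : 1 ≤ s ^ (1 + δ) := Real.one_le_rpow hs₁ (by linarith)
  have hC : 2 * C ≤ γ * s ^ (2 + δ) := calc
    2 * C ≤ γ * s := (div_le_iff₀' hγ).mp ((le_max_right _ _).trans hs)
    _ ≤ γ * s ^ (2 + δ) := by
      rw [hsplit]; gcongr; exact le_mul_of_one_le_left hs₀.le hpow
  refine le_of_mul_le_mul_right ?_ hs₀
  rw [hsplit] at h hC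
  linarith

lemma exists_integral_ge_of_rpow_le {f : ℝ → ℝ} (hf : Continuous f) {c p s₀ : ℝ}
    (hc : 0 ≤ c) (hp : -1 < p) (hs₀ : 0 ≤ s₀) (hbound : ∀ s, s₀ ≤ s → c * s ^ p ≤ f s) :
    ∃ C₁, 0 ≤ C₁ ∧ ∀ v, 0 ≤ v → -C₁ + c / (p + 1) * v ^ (p + 1) ≤ ∫ s in (0)..v, f s := by
  have hp₁ : 0 < p + 1 := by linarith
  set M := ∫ s in (0)..s₀, |f s|
  have hM : 0 ≤ M := integral_nonneg hs₀ fun _ _ ↦ abs_nonneg _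
  have hlow : ∀ v, 0 ≤ v → v ≤ s₀ → -M ≤ ∫ s in (0)..v, f s := fun v hv hvs ↦ calc
    -M ≤ -∫ s in (0)..v, |f s| := by
      gcongr
      exact integral_mono_interval le_rfl hv hvs (.of_forall fun _ ↦ abs_nonneg _)
        (hf.abs.intervalIntegrable _ _)
    _ ≤ -|∫ s in (0)..v, f s| := neg_le_neg (abs_integral_le_integral_abs hv)
    _ ≤ ∫ s in (0)..v, f s := neg_abs_le _
  refine ⟨M + c / (p + 1) * s₀ ^ (p + 1), by positivity, fun v hv ↦ ?_⟩
  rcases le_total v s₀ with hvs | hvs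
  · have hpow : c / (p + 1) * v ^ (p + 1) ≤ c / (p + 1) * s₀ ^ (p + 1) := by gcongr
    linarith [hlow v hv hvs]
  · have htail : c / (p + 1) * (v ^ (p + 1) - s₀ ^ (p + 1)) ≤ ∫ s in s₀..v, f s := calc
      c / (p + 1) * (v ^ (p + 1) - s₀ ^ (p + 1)) = ∫ s in s₀..v, c * s ^ p := by
        rw [intervalIntegral.integral_const_mul, integral_rpow (.inl hp)]; ring
      _ ≤ ∫ s in s₀..v, f s :=
        integral_mono_on hvs ((intervalIntegrable_rpow' hp).const_mul c)
          (hf.intervalIntegrable _ _) fun s hs ↦ hbound s hs.1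
    rw [← integral_add_adjacent_intervals (hf.intervalIntegrable 0 s₀)
      (hf.intervalIntegrable s₀ v)]
    linarith [hlow s₀ hs₀ le_rfl]

lemma exists_integral_ge_of_mul_ge {f : ℝ → ℝ} (hf : Continuous f) {C γ₀ δ : ℝ}
    (hγ₀ : 0 < γ₀) (hδ : -1 ≤ δ) (hdiss : ∀ v : ℝ, f v * v ≥ -C + γ₀ * |v| ^ (2 + δ)) :
    ∃ C₁ γ₁ : ℝ, 0 ≤ C₁ ∧ 0 < γ₁ ∧
      ∀ v, 0 ≤ v → -C₁ + γ₁ * v ^ (2 + δ) ≤ ∫ s in (0)..v, f s := by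
  have hbound : ∀ s, max 1 (2 * C / γ₀) ≤ s → γ₀ / 2 * s ^ (1 + δ) ≤ f s := fun s hs ↦ by
    have hs₀ : 0 ≤ s := zero_le_one.trans ((le_max_left _ _).trans hs)
    exact half_mul_rpow_le_of_mul_ge hγ₀ hδ hs (by simpa [abs_of_nonneg hs₀] using hdiss s)
  obtain ⟨C₁, hC₁, hF⟩ := exists_integral_ge_of_rpow_le hf (by positivity) (by linarith)
    (zero_le_one.trans (le_max_left _ _)) hbound
  refine ⟨C₁, γ₀ / 2 / (1 + δ + 1), hC₁, div_pos (by positivity) (by linarith), fun v hv ↦ ?_⟩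
  simpa only [show 1 + δ + 1 = 2 + δ by ring] using hF v hv

lemma integral_eq_integral_neg_comp_neg (f : ℝ → ℝ) (v : ℝ) :
    ∫ s in (0)..v, f s = ∫ s in (0)..-v, -f (-s) := by
  rw [intervalIntegral.integral_neg, intervalIntegral.integral_comp_neg, neg_neg, neg_zero,
    integral_symm]

theorem stmt0_general (f : ℝ → ℝ) (hf : Continuous f)
    (C γ₀ δ : ℝ) (hγ₀ : 0 < γ₀) (hδ : 0 < δ)
    (hdiss : ∀ v : ℝ, f v * v ≥ -C + γ₀ * |v| ^ (2 + δ)) :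
    ∃ C₁ γ₁ : ℝ, 0 ≤ C₁ ∧ 0 < γ₁ ∧
      ∀ v : ℝ, (∫ s in (0:ℝ)..v, f s) ≥ -C₁ + γ₁ * |v| ^ (2 + δ) := by
  have hdiss_neg : ∀ v : ℝ, -f (-v) * v ≥ -C + γ₀ * |v| ^ (2 + δ) := fun v ↦ by
    simpa [mul_comm] using hdiss (-v)
  obtain ⟨C₁, γ₁, hC₁, hγ₁, hpos⟩ := exists_integral_ge_of_mul_ge hf hγ₀ (by linarith) hdiss
  obtain ⟨C₂, γ₂, hC₂, hγ₂, hneg⟩ := exists_integral_ge_of_mul_ge (f := fun s ↦ -f (-s))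
    (hf.comp continuous_neg).neg hγ₀ (by linarith) hdiss_neg
  refine ⟨max C₁ C₂, min γ₁ γ₂, hC₁.trans (le_max_left _ _), lt_min hγ₁ hγ₂, fun v ↦ ?_⟩
  have hpow : 0 ≤ |v| ^ (2 + δ) := Real.rpow_nonneg (abs_nonneg v) _
  rcases le_total 0 v with hv | hv
  · have := hpos v hv
    rw [abs_of_nonneg hv] at hpow ⊢
    nlinarith [le_max_left C₁ C₂, min_le_left γ₁ γ₂]
  · have := hneg (-v) (neg_nonneg.mpr hv)
    rw [← integral_eq_integral_neg_comp_neg] at this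
    rw [abs_of_nonpos hv] at hpow ⊢
    nlinarith [le_max_right C₁ C₂, min_le_right γ₁ γ₂]

theorem stmt0 (f : ℝ → ℝ) (hf : Continuous f)
    (C γ₀ δ : ℝ) (hC : 0 ≤ C) (hγ₀ : 0 < γ₀) (hδ : 0 < δ)
    (hdiss : ∀ v : ℝ, f v * v ≥ -C + γ₀ * |v| ^ (2 + δ)) :
    ∃ C₁ γ₁ : ℝ, 0 ≤ C₁ ∧ 0 < γ₁ ∧
      ∀ v : ℝ, (∫ s in (0:ℝ)..v, f s) ≥ -C₁ + γ₁ * |v| ^ (2 + δ) :=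
  stmt0_general f hf C γ₀ δ hγ₀ hδ hdiss
end

section
/- Let y : [0,∞) → ℝ be a C² solution of y'' + φ(y)y' + f(y) = h(t), where φ, f ∈ C¹(ℝ), φ(v) ≥ β₀ > 0, f(v)·v ≥ -C + γ₀|v|^{2+δ} with γ₀, δ > 0, and h is bounded. Then there is a monotone function Q (depending only on φ, f) such that y(t)² + y'(t)² ≤ Q(y(0)² + y'(0)² + ‖h‖_{L∞(0,∞)}²) for all t ≥ 0. -/
/-!
Write `Φ`, `F` for the primitives of `φ`, `f` and take the Lyapunov function
`V(u, w) = w² / 2 + (w + Φ u)² / 2 + 2 F u`. Along a solution with `|h| ≤ b`,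
`d/dt V(y, y') = 2 h y' + h Φ(y) - φ(y) y'² - f(y) Φ(y) ≤ -(β₀ y'² - 2 b |y'|) - (f Φ - b |Φ|)(y)`.
Dissipativity gives `f(u) u - b |u| → ∞`, hence `f Φ - b |Φ| → ∞` as `|u| → ∞` because
`Φ(u)/u ≥ β₀`, so `V` decreases outside a compact set of the phase plane that depends only on `b`.
Thus `V(y, y')` stays below the larger of its initial value and its maximum over that set, and `V`
is coercive. Every bound depends on the solution only through `y(0)² + y'(0)² + b²`, and `Q` is the
supremum of what these bounds allow.
-/

open Filter Set

theorem le_max_of_deriv_nonpos_of_le {g g' : ℝ → ℝ} {N : ℝ}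
    (hg : ∀ t, 0 ≤ t → HasDerivAt g (g' t) t) (hN : ∀ t, 0 ≤ t → N ≤ g t → g' t ≤ 0)
    {t : ℝ} (ht : 0 ≤ t) : g t ≤ max (g 0) N := by
  refine le_of_forall_pos_le_add fun ε hε => ?_
  set M := max (g 0) N
  -- the barrier `M + η (1 + s)` has slope `η > 0`, which makes the comparison strict
  set η := ε / (1 + t)
  have hη : 0 < η := by positivity
  have hbarrier : ∀ s, HasDerivAt (fun s => M + η * (1 + s)) η s := fun s => by
    simpa using (((hasDerivAt_id s).const_add 1).const_mul η).const_add M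
  have key := image_le_of_deriv_right_lt_deriv_boundary (a := 0) (b := t) (f := g)
    (fun s hs => (hg s hs.1).continuousAt.continuousWithinAt)
    (fun s hs => (hg s hs.1).hasDerivWithinAt) (by nlinarith [le_max_left (g 0) N]) hbarrier
    (fun s hs hgs => (hN s hs.1 (by nlinarith [le_max_right (g 0) N, hs.1])).trans_lt hη)
    ⟨ht, le_rfl⟩
  have : η * (1 + t) = ε := div_mul_cancel₀ _ (by positivity)
  linarith

theorem tendsto_atTop_of_hasDerivAt_of_one_le {F F' : ℝ → ℝ} (hF : ∀ x, HasDerivAt F (F' x) x)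
    (h : ∀ᶠ x in atTop, 1 ≤ F' x) : Tendsto F atTop atTop := by
  obtain ⟨R, hR⟩ := eventually_atTop.1 h
  have hgrow : ∀ x, R ≤ x → 1 * (x - R) ≤ F x - F R := fun x hx =>
    (convex_Ici R).mul_sub_le_image_sub_of_le_deriv
      (fun y _ => (hF y).continuousAt.continuousWithinAt)
      (fun y _ => (hF y).differentiableAt.differentiableWithinAt)
      (fun y hy => (hF y).deriv ▸ hR y (interior_subset hy)) R (mem_Ici.2 le_rfl) x hx hx
  refine tendsto_atTop_mono' _ ?_ (tendsto_atTop_add_const_right _ (F R - R) tendsto_id)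
  filter_upwards [eventually_ge_atTop R] with x hx
  show x + (F R - R) ≤ F x
  linarith [hgrow x hx]

theorem exists_forall_le_imp_of_tendsto_cocompact {X : Type*} [TopologicalSpace X] {S V : X → ℝ}
    (hS : Tendsto S (cocompact X) atTop) (hV : Continuous V) (c : ℝ) :
    ∃ N, ∀ x, N ≤ V x → c ≤ S x := by
  obtain ⟨K, hK, hKS⟩ := mem_cocompact.1 (hS.eventually_ge_atTop c)
  obtain ⟨N, hN⟩ := hK.bddAbove_image hV.continuousOn
  refine ⟨N + 1, fun x hx => hKS fun hxK => ?_⟩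
  linarith [hN (mem_image_of_mem V hxK)]

theorem tendsto_add_cocompact_prod {X Y : Type*} [TopologicalSpace X] [TopologicalSpace Y]
    [Nonempty X] [Nonempty Y] {g₁ : X → ℝ} {g₂ : Y → ℝ}
    (hc₁ : Continuous g₁) (h₁ : Tendsto g₁ (cocompact X) atTop)
    (hc₂ : Continuous g₂) (h₂ : Tendsto g₂ (cocompact Y) atTop) :
    Tendsto (fun p : X × Y => g₁ p.1 + g₂ p.2) (cocompact (X × Y)) atTop := by
  obtain ⟨x₀, hx₀⟩ := hc₁.exists_forall_le h₁
  obtain ⟨y₀, hy₀⟩ := hc₂.exists_forall_le h₂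
  rw [← Filter.coprod_cocompact]
  refine tendsto_sup.2 ⟨?_, ?_⟩
  · exact tendsto_atTop_add_right_of_le _ (g₂ y₀) (h₁.comp tendsto_comap) fun p => hy₀ p.2
  · exact tendsto_atTop_add_left_of_le _ (g₁ x₀) (fun p => hx₀ p.1) (h₂.comp tendsto_comap)

theorem exists_monotone_forall_le_of_bddAbove {S : ℝ → Set ℝ} (hS : Monotone S)
    (hbdd : ∀ D, BddAbove (S D)) : ∃ Q : ℝ → ℝ, Monotone Q ∧ ∀ D, ∀ v ∈ S D, v ≤ Q D :=
  ⟨fun D => sSup (insert 0 (S D)),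
    fun _ D' hD => csSup_le_csSup ((hbdd D').insert 0) (insert_nonempty _ _)
      (insert_subset_insert (hS hD)),
    fun D _ hv => le_csSup ((hbdd D).insert 0) (mem_insert_of_mem _ hv)⟩

theorem tendsto_mul_sq_sub_mul_abs {a : ℝ} (ha : 0 < a) (b : ℝ) :
    Tendsto (fun u : ℝ => a * u ^ 2 - b * |u|) (cocompact ℝ) atTop := by
  have : Tendsto (fun r : ℝ => r * (a * r - b)) atTop atTop :=
    tendsto_id.atTop_mul_atTop₀ (tendsto_atTop_add_const_right _ _ (tendsto_id.const_mul_atTop ha))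
  refine (this.comp tendsto_norm_cocompact_atTop).congr fun u => ?_
  simp only [Function.comp_apply, Real.norm_eq_abs]
  rw [← sq_abs u]; ring

noncomputable def primitive (g : ℝ → ℝ) (u : ℝ) : ℝ := ∫ v in (0 : ℝ)..u, g v

section Primitive

variable {g : ℝ → ℝ}

theorem hasDerivAt_primitive (hg : Continuous g) (u : ℝ) : HasDerivAt (primitive g) (g u) u :=
  (hg.integral_hasStrictDerivAt 0 u).hasDerivAt

theorem continuous_primitive_of_continuous (hg : Continuous g) : Continuous (primitive g) :=
  continuous_iff_continuousAt.2 fun u => (hasDerivAt_primitive hg u).continuousAt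

theorem primitive_zero : primitive g 0 = 0 := intervalIntegral.integral_same

theorem monotone_primitive_sub_mul (hg : Continuous g) {β : ℝ} (hβ : ∀ v, β ≤ g v) :
    Monotone fun u => primitive g u - β * u := by
  have hd : ∀ u, HasDerivAt (fun u => primitive g u - β * u) (g u - β) u := fun u => by
    simpa using (hasDerivAt_primitive hg u).fun_sub ((hasDerivAt_id u).const_mul β)
  exact monotone_of_deriv_nonneg (fun u => (hd u).differentiableAt)
    fun u => (hd u).deriv ▸ sub_nonneg.2 (hβ u)

theorem tendsto_primitive_cocompact (hg : Continuous g)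
    (h : ∀ᶠ u in cocompact ℝ, |u| ≤ g u * u) : Tendsto (primitive g) (cocompact ℝ) atTop := by
  rw [cocompact_eq_atBot_atTop, eventually_sup] at h
  rw [cocompact_eq_atBot_atTop]
  refine tendsto_sup.2 ⟨?_, tendsto_atTop_of_hasDerivAt_of_one_le (hasDerivAt_primitive hg) ?_⟩
  · have hneg := tendsto_atTop_of_hasDerivAt_of_one_le
      (fun x => ((hasDerivAt_primitive hg (-x)).comp x (hasDerivAt_neg x))) ?_
    · simpa [Function.comp_def] using hneg.comp tendsto_neg_atBot_atTop
    filter_upwards [tendsto_neg_atTop_atBot.eventually h.1, eventually_gt_atTop 0] with x hx hx0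
    rw [abs_of_neg (neg_neg_of_pos hx0)] at hx
    nlinarith
  · filter_upwards [h.2, eventually_gt_atTop 0] with x hx hx0
    rw [abs_of_pos hx0] at hx
    nlinarith

end Primitive

theorem tendsto_mul_self_sub_mul_abs {f : ℝ → ℝ} {C γ₀ δ : ℝ} (hγ₀ : 0 < γ₀) (hδ : 0 < δ)
    (hdiss : ∀ v : ℝ, -C + γ₀ * |v| ^ (2 + δ) ≤ f v * v) (b : ℝ) :
    Tendsto (fun u => f u * u - b * |u|) (cocompact ℝ) atTop := by
  refine tendsto_atTop_mono' _ ?_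
    (tendsto_atTop_add_const_right _ (-C) (tendsto_mul_sq_sub_mul_abs hγ₀ b))
  filter_upwards [tendsto_norm_cocompact_atTop.eventually_ge_atTop 1] with u hu
  have hpow : |u| ^ (2 : ℝ) ≤ |u| ^ (2 + δ) :=
    Real.rpow_le_rpow_of_exponent_le hu (by linarith)
  rw [Real.rpow_two, sq_abs] at hpow
  nlinarith [hdiss u]

theorem mul_sub_mul_abs_le {β b u p x : ℝ} (hβ : 0 ≤ β) (hp₁ : 0 ≤ u → β * u ≤ p)
    (hp₂ : u ≤ 0 → p ≤ β * u) (h : 0 ≤ x * u - b * |u|) :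
    β * (x * u - b * |u|) ≤ x * p - b * |p| := by
  rcases lt_trichotomy u 0 with hu | rfl | hu
  · have hp : p ≤ β * u := hp₂ hu.le
    rw [abs_of_neg hu] at h ⊢
    rw [abs_of_nonpos (hp.trans (mul_nonpos_of_nonneg_of_nonpos hβ hu.le))]
    have hxb : x + b ≤ 0 := by nlinarith
    nlinarith [mul_nonneg_of_nonpos_of_nonpos hxb (sub_nonpos.2 hp)]
  · simp [le_antisymm (hp₂ le_rfl) (by simpa using hp₁ le_rfl)]
  · have hp : β * u ≤ p := hp₁ hu.le
    rw [abs_of_pos hu] at h ⊢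
    rw [abs_of_nonneg ((mul_nonneg hβ hu.le).trans hp)]
    have hxb : 0 ≤ x - b := by nlinarith
    nlinarith [mul_nonneg hxb (sub_nonneg.2 hp)]

theorem tendsto_mul_primitive_sub_mul_abs {φ f : ℝ → ℝ} {β₀ b : ℝ} (hφ : Continuous φ)
    (hβ₀ : 0 < β₀) (hφpos : ∀ v, β₀ ≤ φ v)
    (hf : Tendsto (fun u => f u * u - b * |u|) (cocompact ℝ) atTop) :
    Tendsto (fun u => f u * primitive φ u - b * |primitive φ u|) (cocompact ℝ) atTop := by
  have hmono := monotone_primitive_sub_mul hφ hφpos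
  refine tendsto_atTop_mono' _ ?_ (hf.const_mul_atTop hβ₀)
  filter_upwards [hf.eventually_ge_atTop 0] with u hu
  refine mul_sub_mul_abs_le hβ₀.le (fun hu₀ => ?_) (fun hu₀ => ?_) hu
  · simpa [primitive_zero] using hmono hu₀
  · simpa [primitive_zero] using hmono hu₀

-- The middle term is the Liénard variable `y' + Φ(y)`, whose derivative `h - f(y)` does not see
-- the damping.
noncomputable def lyapunov (φ f : ℝ → ℝ) (p : ℝ × ℝ) : ℝ :=
  p.2 ^ 2 / 2 + (p.2 + primitive φ p.1) ^ 2 / 2 + 2 * primitive f p.1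

section Lyapunov

variable {φ f : ℝ → ℝ}

theorem continuous_lyapunov (hφ : Continuous φ) (hf : Continuous f) :
    Continuous (lyapunov φ f) := by
  have := continuous_primitive_of_continuous hφ
  have := continuous_primitive_of_continuous hf
  unfold lyapunov
  fun_prop

theorem tendsto_lyapunov_cocompact (hf : Continuous f)
    (hF : ∀ᶠ u in cocompact ℝ, |u| ≤ f u * u) :
    Tendsto (lyapunov φ f) (cocompact (ℝ × ℝ)) atTop := by
  refine tendsto_atTop_mono (fun p => ?_) (tendsto_add_cocompact_prod
    (g₁ := fun u => 2 * primitive f u)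
    (continuous_const.mul (continuous_primitive_of_continuous hf))
    ((tendsto_primitive_cocompact hf hF).const_mul_atTop two_pos) (by fun_prop)
    (tendsto_mul_sq_sub_mul_abs (one_half_pos (α := ℝ)) 0))
  simp only [lyapunov]
  nlinarith [sq_nonneg (p.2 + primitive φ p.1)]

theorem hasDerivAt_lyapunov (hφ : Continuous φ) (hf : Continuous f) {y y' : ℝ → ℝ} {t a e : ℝ}
    (hy : HasDerivAt y (y' t) t) (hy' : HasDerivAt y' a t)
    (hode : a + φ (y t) * y' t + f (y t) = e) :
    HasDerivAt (fun s => lyapunov φ f (y s, y' s)) (2 * e * y' t + e * primitive φ (y t)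
      - φ (y t) * y' t ^ 2 - f (y t) * primitive φ (y t)) t := by
  have hΦ := (hasDerivAt_primitive hφ (y t)).comp t hy
  have hF := (hasDerivAt_primitive hf (y t)).comp t hy
  refine ((((hy'.pow 2).div_const 2).add (((hy'.add hΦ).pow 2).div_const 2)).add
    (hF.const_mul 2)).congr_deriv ?_
  simp only [Pi.add_apply, Function.comp_apply, ← hode]
  ring

theorem lyapunov_deriv_le {β₀ b e u w : ℝ} (hφpos : ∀ v, β₀ ≤ φ v) (he : |e| ≤ b) :
    2 * e * w + e * primitive φ u - φ u * w ^ 2 - f u * primitive φ u ≤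
      -((f u * primitive φ u - b * |primitive φ u|) + (β₀ * w ^ 2 - 2 * b * |w|)) := by
  have hforce : ∀ z, e * z ≤ b * |z| := fun z => calc
    e * z ≤ |e| * |z| := abs_mul e z ▸ le_abs_self _
    _ ≤ b * |z| := mul_le_mul_of_nonneg_right he (abs_nonneg z)
  nlinarith [hforce w, hforce (primitive φ u), mul_le_mul_of_nonneg_right (hφpos u) (sq_nonneg w)]

end Lyapunov

theorem exists_bound_of_initial_data_le {φ f : ℝ → ℝ} {β₀ C γ₀ δ : ℝ} (hφ : Continuous φ)
    (hf : Continuous f) (hβ₀ : 0 < β₀) (hφpos : ∀ v, β₀ ≤ φ v) (hγ₀ : 0 < γ₀) (hδ : 0 < δ)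
    (hdiss : ∀ v : ℝ, -C + γ₀ * |v| ^ (2 + δ) ≤ f v * v) (D : ℝ) :
    ∃ M, ∀ (y y' y'' h : ℝ → ℝ) (B : ℝ),
      (∀ t, 0 ≤ t → HasDerivAt y (y' t) t) →
      (∀ t, 0 ≤ t → HasDerivAt y' (y'' t) t) →
      (∀ t, 0 ≤ t → y'' t + φ (y t) * y' t + f (y t) = h t) →
      (∀ t, 0 ≤ t → |h t| ≤ B) →
      y 0 ^ 2 + y' 0 ^ 2 + B ^ 2 ≤ D →
      ∀ t, 0 ≤ t → y t ^ 2 + y' t ^ 2 ≤ M := by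
  set r := √D
  have hgrowth := tendsto_mul_self_sub_mul_abs hγ₀ hδ hdiss
  have hV := continuous_lyapunov hφ hf
  -- above the level `N₁` of `V`, `V(y, y')` is nonincreasing whenever `|h| ≤ r`
  obtain ⟨N₁, hN₁⟩ := exists_forall_le_imp_of_tendsto_cocompact (tendsto_add_cocompact_prod
    (by have := continuous_primitive_of_continuous hφ; fun_prop)
    (tendsto_mul_primitive_sub_mul_abs hφ hβ₀ hφpos (hgrowth r)) (by fun_prop)
    (tendsto_mul_sq_sub_mul_abs hβ₀ (2 * r))) hV 0
  obtain ⟨N₀, hN₀⟩ := (isCompact_Icc.prod isCompact_Icc).bddAbove_image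
    (K := Icc (-r) r ×ˢ Icc (-r) r) hV.continuousOn
  obtain ⟨M, hM⟩ := exists_forall_le_imp_of_tendsto_cocompact
    (tendsto_lyapunov_cocompact hf (by
      filter_upwards [(hgrowth 1).eventually_ge_atTop 0] with u hu
      linarith))
    (show Continuous fun p : ℝ × ℝ => p.1 ^ 2 + p.2 ^ 2 by fun_prop) (max N₀ N₁ + 1)
  refine ⟨M, fun y y' y'' h B hy hy' hode hh hD t ht => ?_⟩
  have hB : B ≤ r := (le_abs_self B).trans (Real.abs_le_sqrt (by nlinarith))
  have hinit : (y 0, y' 0) ∈ Icc (-r) r ×ˢ Icc (-r) r :=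
    ⟨abs_le.1 (Real.abs_le_sqrt (by nlinarith)), abs_le.1 (Real.abs_le_sqrt (by nlinarith))⟩
  have hL := le_max_of_deriv_nonpos_of_le
    (fun s hs => hasDerivAt_lyapunov hφ hf (hy s hs) (hy' s hs) (hode s hs))
    (fun s hs hN => (lyapunov_deriv_le hφpos ((hh s hs).trans hB)).trans
      (neg_nonpos.2 (hN₁ _ hN))) ht
  have hL0 := hN₀ (mem_image_of_mem _ hinit)
  by_contra hlt
  have := hM (y t, y' t) (not_le.1 hlt).le
  linarith [max_le_max hL0 (le_refl N₁)]

/-- Uniform-in-time bound for the damped ODE `y'' + φ(y) y' + f(y) = h(t)`: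
the monotone function `Q` depends only on `φ` and `f`. -/
theorem stmt2 (φ f : ℝ → ℝ) (hφ : ContDiff ℝ 1 φ) (hf : ContDiff ℝ 1 f)
    (β₀ : ℝ) (hβ₀ : 0 < β₀) (hφpos : ∀ v, φ v ≥ β₀)
    (C γ₀ δ : ℝ) (hγ₀ : 0 < γ₀) (hδ : 0 < δ)
    (hdiss : ∀ v : ℝ, f v * v ≥ -C + γ₀ * |v| ^ (2 + δ)) :
    ∃ Q : ℝ → ℝ, Monotone Q ∧
      ∀ (y y' y'' h : ℝ → ℝ) (B : ℝ),
        (∀ t, 0 ≤ t → HasDerivAt y (y' t) t) →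
        (∀ t, 0 ≤ t → HasDerivAt y' (y'' t) t) →
        (∀ t, 0 ≤ t → y'' t + φ (y t) * y' t + f (y t) = h t) →
        (∀ t, 0 ≤ t → |h t| ≤ B) →
        ∀ t, 0 ≤ t → y t ^ 2 + y' t ^ 2 ≤ Q (y 0 ^ 2 + y' 0 ^ 2 + B ^ 2) := by
  let S : ℝ → Set ℝ := fun D => {v | ∃ (y y' y'' h : ℝ → ℝ) (B t : ℝ),
    (∀ t, 0 ≤ t → HasDerivAt y (y' t) t) ∧ (∀ t, 0 ≤ t → HasDerivAt y' (y'' t) t) ∧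
    (∀ t, 0 ≤ t → y'' t + φ (y t) * y' t + f (y t) = h t) ∧ (∀ t, 0 ≤ t → |h t| ≤ B) ∧
    y 0 ^ 2 + y' 0 ^ 2 + B ^ 2 ≤ D ∧ 0 ≤ t ∧ v = y t ^ 2 + y' t ^ 2}
  have hS : Monotone S := fun D D' hD v ⟨y, y', y'', h, B, t, hy, hy', hode, hh, hD₀, ht, hv⟩ =>
    ⟨y, y', y'', h, B, t, hy, hy', hode, hh, hD₀.trans hD, ht, hv⟩
  have hbdd : ∀ D, BddAbove (S D) := fun D => by
    obtain ⟨M, hM⟩ := exists_bound_of_initial_data_le hφ.continuous hf.continuous hβ₀ hφpos hγ₀ hδ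
      hdiss D
    exact ⟨M, fun v ⟨y, y', y'', h, B, t, hy, hy', hode, hh, hD, ht, hv⟩ =>
      hv ▸ hM y y' y'' h B hy hy' hode hh hD t ht⟩
  obtain ⟨Q, hQ, hle⟩ := exists_monotone_forall_le_of_bddAbove hS hbdd
  exact ⟨Q, hQ, fun y y' y'' h B hy hy' hode hh t ht =>
    hle _ _ ⟨y, y', y'', h, B, t, hy, hy', hode, hh, le_rfl, ht, rfl⟩⟩
end

section
/- Let y be a bounded C² solution on [0,∞) of y'' + φ(y)y' + f(y) = h(t) with φ(v) ≥ β₀ > 0 and h bounded with bounded derivative. Define S(t) := y'(t)² + 2F(y(t)) - 2h(t)y(t), where F' = f. Then S'(t) = -2φ(y(t))·y'(t)² - 2h'(t)·y(t) for all t ≥ 0; in particular, if moreover ∫₀^∞ |h'(t)|·|y(t)| dt < ∞, then ∫₀^∞ φ(y(t))·y'(t)² dt < ∞. -/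
open MeasureTheory Set Filter

/-! The energy `S = y'² + 2 F(y) - 2 h y` satisfies `S' = -2 φ(y) y'² - 2 h' y` along solutions,
by the chain rule and the equation. Integrating over `[0, b]`, the dissipation
`∫₀ᵇ φ(y) y'²` is bounded by `(S 0 - S b) / 2 + ∫₀^∞ |h'| |y|`, and `S` is bounded below
because `y`, `h` are bounded and `F` is continuous. As `φ(y) y'² ≥ 0`, bounded partial integrals
give integrability on `[0, ∞)`. -/

theorem hasDerivAt_energy {F f h y y' : ℝ → ℝ} {t a b : ℝ}
    (hF : HasDerivAt F (f (y t)) (y t)) (hh : HasDerivAt h b t)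
    (hy : HasDerivAt y (y' t) t) (hy' : HasDerivAt y' a t) :
    HasDerivAt (fun t => y' t ^ 2 + 2 * F (y t) - 2 * h t * y t)
      (2 * y' t * (a + f (y t) - h t) - 2 * b * y t) t := by
  refine (((hy'.fun_pow 2).fun_add ((hF.comp t hy).const_mul 2)).fun_sub
    ((hh.const_mul 2).fun_mul hy)).congr_deriv ?_
  push_cast
  ring

theorem integrableOn_Ici_of_hasDerivAt_sub_of_forall_le {S g k : ℝ → ℝ} {a m : ℝ}
    (hS : ∀ t ∈ Ici a, HasDerivAt S (k t - g t) t) (hg : ContinuousOn g (Ici a))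
    (hg0 : ∀ t ∈ Ici a, 0 ≤ g t) (hk : IntegrableOn k (Ici a)) (hm : ∀ t ∈ Ici a, m ≤ S t) :
    IntegrableOn g (Ici a) := by
  have hgi : ∀ b, IntegrableOn g (Icc a b) := fun b =>
    (hg.mono Icc_subset_Ici_self).integrableOn_compact isCompact_Icc
  rw [integrableOn_Ici_iff_integrableOn_Ioi]
  refine integrableOn_Ioi_of_intervalIntegral_norm_bounded ((∫ t in Ici a, ‖k t‖) + S a - m) a
    (fun b => (hgi b).mono_set Ioc_subset_Icc_self) tendsto_id ?_
  filter_upwards [eventually_ge_atTop a] with b hab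
  have hsub : uIcc a b ⊆ Ici a := by rw [uIcc_of_le hab]; exact Icc_subset_Ici_self
  have hki : IntervalIntegrable k volume a b :=
    (intervalIntegrable_iff_integrableOn_Icc_of_le hab).2 (hk.mono_set Icc_subset_Ici_self)
  have hgi' : IntervalIntegrable g volume a b :=
    (intervalIntegrable_iff_integrableOn_Icc_of_le hab).2 (hgi b)
  have hftc : ∫ t in a..b, (k t - g t) = S b - S a :=
    intervalIntegral.integral_eq_sub_of_hasDerivAt (fun t ht => hS t (hsub ht)) (hki.sub hgi')
  have hk_le : ∫ t in a..b, k t ≤ ∫ t in Ici a, ‖k t‖ := by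
    rw [intervalIntegral.integral_of_le hab]
    calc ∫ t in Ioc a b, k t ≤ ∫ t in Ioc a b, ‖k t‖ :=
          (Real.le_norm_self _).trans (norm_integral_le_integral_norm _)
      _ ≤ ∫ t in Ici a, ‖k t‖ := setIntegral_mono_set hk.norm
            (.of_forall fun _ => norm_nonneg _)
            (.of_forall (Ioc_subset_Ioi_self.trans Ioi_subset_Ici_self))
  have hnorm : ∫ t in a..b, ‖g t‖ = ∫ t in a..b, g t :=
    intervalIntegral.integral_congr fun t ht => Real.norm_of_nonneg (hg0 t (hsub ht))
  rw [intervalIntegral.integral_sub hki hgi'] at hftc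
  linarith [hm b hab]

theorem exists_forall_le_energy {F h y y' : ℝ → ℝ} (hF : Continuous F) {Mh My : ℝ}
    (hh : ∀ t ∈ Ici (0 : ℝ), |h t| ≤ Mh) (hy : ∀ t ∈ Ici (0 : ℝ), |y t| ≤ My) :
    ∃ m, ∀ t ∈ Ici (0 : ℝ), m ≤ y' t ^ 2 + 2 * F (y t) - 2 * h t * y t := by
  obtain ⟨C, hC⟩ := (isCompact_Icc (a := -My) (b := My)).exists_bound_of_continuousOn
    hF.continuousOn
  refine ⟨-2 * C - 2 * (Mh * My), fun t ht => ?_⟩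
  have hFC : -C ≤ F (y t) := neg_le_of_abs_le (hC (y t) (abs_le.mp (hy t ht)))
  have hhy : h t * y t ≤ Mh * My := (le_abs_self _).trans <| by
    rw [abs_mul]
    exact mul_le_mul (hh t ht) (hy t ht) (abs_nonneg _) ((abs_nonneg _).trans (hh t ht))
  nlinarith [sq_nonneg (y' t)]

theorem stmt3_general (φ f F h y y' y'' : ℝ → ℝ)
    (hφ : ContDiff ℝ 1 φ)
    (β₀ : ℝ) (hβ₀ : 0 < β₀) (hφpos : ∀ v, φ v ≥ β₀)
    (hF : ∀ v, HasDerivAt F (f v) v)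
    (hh : ContDiff ℝ 1 h)
    (Mh : ℝ) (hhb : ∀ t, 0 ≤ t → |h t| ≤ Mh ∧ |deriv h t| ≤ Mh)
    (My : ℝ) (hyb : ∀ t, 0 ≤ t → |y t| ≤ My)
    (hy : ∀ t, 0 ≤ t → HasDerivAt y (y' t) t)
    (hy' : ∀ t, 0 ≤ t → HasDerivAt y' (y'' t) t)
    (heq : ∀ t, 0 ≤ t → y'' t + φ (y t) * y' t + f (y t) = h t) :
    (∀ t, 0 ≤ t →
      HasDerivAt (fun t => y' t ^ 2 + 2 * F (y t) - 2 * h t * y t)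
        (-2 * φ (y t) * y' t ^ 2 - 2 * deriv h t * y t) t) ∧
    (IntegrableOn (fun t => |deriv h t| * |y t|) (Set.Ici (0:ℝ)) →
      IntegrableOn (fun t => φ (y t) * y' t ^ 2) (Set.Ici (0:ℝ))) := by
  have hS : ∀ t, 0 ≤ t → HasDerivAt (fun t => y' t ^ 2 + 2 * F (y t) - 2 * h t * y t)
      (-2 * φ (y t) * y' t ^ 2 - 2 * deriv h t * y t) t := fun t ht =>
    (hasDerivAt_energy (hF _) (hh.differentiable one_ne_zero t).hasDerivAt (hy t ht)
      (hy' t ht)).congr_deriv (by linear_combination 2 * y' t * heq t ht)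
  refine ⟨hS, fun hI => ?_⟩
  obtain ⟨m, hm⟩ := exists_forall_le_energy (y' := y')
    (continuous_iff_continuousAt.2 fun v => (hF v).continuousAt)
    (fun t ht => (hhb t ht).1) (fun t ht => hyb t ht)
  have hyc : ContinuousOn y (Ici 0) := fun t ht => (hy t ht).continuousAt.continuousWithinAt
  have hy'c : ContinuousOn y' (Ici 0) := fun t ht => (hy' t ht).continuousAt.continuousWithinAt
  have hk : IntegrableOn (fun t => -(2 * (deriv h t * y t))) (Ici 0) := by
    refine (hI.const_mul 2).mono' ?_ (.of_forall fun t => ?_)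
    · have := (hh.continuous_deriv le_rfl).continuousOn (s := Ici 0)
      exact ContinuousOn.aestronglyMeasurable (by fun_prop) measurableSet_Ici
    · simp
  have hdiss := integrableOn_Ici_of_hasDerivAt_sub_of_forall_le
    (g := fun t => 2 * (φ (y t) * y' t ^ 2))
    (fun t ht => (hS t ht).congr_deriv (by ring))
    (continuousOn_const.mul ((hφ.continuous.comp_continuousOn hyc).mul (hy'c.pow 2)))
    (fun t _ => by have := hβ₀.le.trans (hφpos (y t)); positivity) hk hm
  simpa [IntegrableOn] using hdiss.div_const 2

/-- Energy identity and dissipation integral for the damped ODE. -/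
theorem stmt3 (φ f F h y y' y'' : ℝ → ℝ)
    (hφ : ContDiff ℝ 1 φ) (hfC : ContDiff ℝ 1 f)
    (β₀ : ℝ) (hβ₀ : 0 < β₀) (hφpos : ∀ v, φ v ≥ β₀)
    (hF : ∀ v, HasDerivAt F (f v) v)
    (hh : ContDiff ℝ 1 h)
    (Mh : ℝ) (hhb : ∀ t, 0 ≤ t → |h t| ≤ Mh ∧ |deriv h t| ≤ Mh)
    (My : ℝ) (hyb : ∀ t, 0 ≤ t → |y t| ≤ My)
    (hy : ∀ t, 0 ≤ t → HasDerivAt y (y' t) t)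
    (hy' : ∀ t, 0 ≤ t → HasDerivAt y' (y'' t) t)
    (heq : ∀ t, 0 ≤ t → y'' t + φ (y t) * y' t + f (y t) = h t) :
    (∀ t, 0 ≤ t →
      HasDerivAt (fun t => y' t ^ 2 + 2 * F (y t) - 2 * h t * y t)
        (-2 * φ (y t) * y' t ^ 2 - 2 * deriv h t * y t) t) ∧
    (IntegrableOn (fun t => |deriv h t| * |y t|) (Set.Ici (0:ℝ)) →
      IntegrableOn (fun t => φ (y t) * y' t ^ 2) (Set.Ici (0:ℝ))) :=
  stmt3_general φ f F h y y' y'' hφ β₀ hβ₀ hφpos hF hh Mh hhb My hyb hy hy' heq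
end

section
/- Let S(t) be a semigroup of Lipschitz maps on a Banach space X (Lipschitz constants locally uniform in t), which is dissipative (there is a bounded absorbing set) and such that for every bounded set B the Kuratowski measure of non-compactness satisfies α(S(t)B) → 0 as t → ∞. Then the ω-limit set ω(B) := ⋂_{τ≥0} closure(⋃_{t≥τ} S(t)B) of any bounded set B is nonempty and compact, and attracts B: dist(S(t)B, ω(B)) → 0 as t → ∞. -/
/-!
Once the semiflow has moved `B` into the absorbing set `B₀`, a tail `⋃_{t ≥ τ} S(t) B` with
`τ` large lies in `S(s) B₀` for some large `s`, a set contained in `B₀` and hence bounded.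
So the closed tails form a decreasing family of nonempty closed sets whose Kuratowski measure
tends to `0`. By Kuratowski's generalisation of Cantor's intersection theorem, their
intersection `ω(B)` is nonempty and compact, and the tails eventually lie in any
`ε`-neighbourhood of it: otherwise the parts of the tails outside that neighbourhood would be
a family of the same kind with empty intersection.
-/

open Metric

/-- The Kuratowski measure of non-compactness of a set: the infimum of `r > 0`
such that the set can be covered by finitely many balls of radius `r`. -/
noncomputable def kuratowskiMeasure {X : Type*} [MetricSpace X] (s : Set X) : ℝ :=
  sInf {r : ℝ | 0 < r ∧ ∃ t : Finset X, s ⊆ ⋃ x ∈ t, Metric.ball x r}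

open Filter Set

lemma exists_finset_closure_subset_of_kuratowskiMeasure_lt {X : Type*} [MetricSpace X]
    {s : Set X} (hs : Bornology.IsBounded s) {ε : ℝ} (h : kuratowskiMeasure s < ε) :
    ∃ c : Finset X, closure s ⊆ ⋃ x ∈ c, ball x ε := by
  have hradii : {r : ℝ | 0 < r ∧ ∃ c : Finset X, s ⊆ ⋃ x ∈ c, ball x r}.Nonempty := by
    rcases s.eq_empty_or_nonempty with rfl | ⟨x, -⟩
    · exact ⟨1, one_pos, ∅, empty_subset _⟩
    · obtain ⟨R, hR, hsub⟩ := hs.subset_ball_lt 0 x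
      exact ⟨R, hR, {x}, by simpa using hsub⟩
  obtain ⟨r, ⟨-, c, hc⟩, hrε⟩ := exists_lt_of_csInf_lt hradii h
  have hclosed : IsClosed (⋃ x ∈ c, closedBall x r) :=
    c.finite_toSet.isClosed_biUnion fun x _ => isClosed_closedBall
  have hsub : s ⊆ ⋃ x ∈ c, closedBall x r :=
    hc.trans (iUnion₂_mono fun x _ => ball_subset_closedBall)
  exact ⟨c, (closure_minimal hsub hclosed).trans
    (iUnion₂_mono fun x _ => closedBall_subset_ball hrε)⟩

section KuratowskiIntersection

variable {X : Type*} [MetricSpace X] {G : ℕ → Set X}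
  (hcov : ∀ ε > 0, ∃ n, ∃ c : Finset X, G n ⊆ ⋃ x ∈ c, ball x ε)
include hcov

lemma totallyBounded_range_of_forall_mem (hG : Antitone G) {y : ℕ → X}
    (hy : ∀ n, y n ∈ G n) : TotallyBounded (range y) := by
  refine Metric.totallyBounded_iff.2 fun ε hε => ?_
  obtain ⟨n, c, hc⟩ := hcov ε hε
  refine ⟨↑c ∪ y '' Iio n, c.finite_toSet.union ((finite_Iio n).image y), ?_⟩
  rintro _ ⟨k, rfl⟩
  rcases lt_or_ge k n with hk | hk
  · exact mem_biUnion (mem_union_right _ ⟨k, hk, rfl⟩) (mem_ball_self hε)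
  · obtain ⟨x, hx, hkx⟩ := mem_iUnion₂.1 (hc (hG hk (hy k)))
    exact mem_biUnion (mem_union_left _ hx) hkx

lemma nonempty_iInter_of_forall_exists_finset_subset [CompleteSpace X] (hG : Antitone G)
    (hclosed : ∀ n, IsClosed (G n)) (hne : ∀ n, (G n).Nonempty) : (⋂ n, G n).Nonempty := by
  choose y hy using hne
  set C := closure (range y)
  have hC : IsCompact C :=
    (totallyBounded_range_of_forall_mem hcov hG hy).closure.isCompact_of_isClosed isClosed_closure
  have hCG : (⋂ n, C ∩ G n).Nonempty :=
    IsCompact.nonempty_iInter_of_sequence_nonempty_isCompact_isClosed (fun n => C ∩ G n)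
      (fun n => inter_subset_inter_right C (hG n.le_succ))
      (fun n => ⟨y n, subset_closure (mem_range_self n), hy n⟩)
      (hC.inter_right (hclosed 0)) (fun n => isClosed_closure.inter (hclosed n))
  exact hCG.mono (iInter_mono fun n => inter_subset_right)

lemma isCompact_iInter_of_forall_exists_finset_subset [CompleteSpace X]
    (hclosed : ∀ n, IsClosed (G n)) : IsCompact (⋂ n, G n) := by
  refine TotallyBounded.isCompact_of_isClosed ?_ (isClosed_iInter hclosed)
  refine Metric.totallyBounded_iff.2 fun ε hε => ?_
  obtain ⟨n, c, hc⟩ := hcov ε hε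
  exact ⟨c, c.finite_toSet, (iInter_subset G n).trans hc⟩

lemma exists_subset_thickening_iInter_of_forall_exists_finset_subset [CompleteSpace X]
    (hG : Antitone G) (hclosed : ∀ n, IsClosed (G n)) {ε : ℝ} (hε : 0 < ε) :
    ∃ n, G n ⊆ thickening ε (⋂ n, G n) := by
  by_contra! hout
  set F := fun n => G n \ thickening ε (⋂ n, G n)
  obtain ⟨p, hp⟩ := nonempty_iInter_of_forall_exists_finset_subset (G := F)
    (fun δ hδ => (hcov δ hδ).imp fun n ⟨c, hc⟩ => ⟨c, sdiff_subset.trans hc⟩)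
    (fun m n hmn => sdiff_subset_sdiff_left (hG hmn))
    (fun n => (hclosed n).sdiff isOpen_thickening)
    (fun n => sdiff_nonempty.2 (hout n))
  have hpG : p ∈ ⋂ n, G n := mem_iInter.2 fun n => (mem_iInter.1 hp n).1
  exact (mem_iInter.1 hp 0).2 (self_subset_thickening hε _ hpG)

end KuratowskiIntersection

lemma biInter_Ici_zero_eq_iInter_nat {X : Type*} {f : ℝ → Set X} (hf : Antitone f)
    {T : ℝ} (hT : 0 ≤ T) : ⋂ τ ∈ Ici (0 : ℝ), f τ = ⋂ n : ℕ, f (T + n) := by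
  refine Subset.antisymm (subset_iInter fun n => biInter_subset_of_mem ?_) ?_
  · exact add_nonneg hT n.cast_nonneg
  · refine subset_iInter₂ fun τ _ => (iInter_subset _ ⌈τ⌉₊).trans (hf ?_)
    linarith [Nat.le_ceil τ]

section Semiflow

variable {X : Type*} {S : ℝ → X → X}

lemma antitone_closure_biUnion_image [TopologicalSpace X] (B : Set X) :
    Antitone fun τ : ℝ => closure (⋃ t ∈ Ici τ, S t '' B) :=
  fun _ _ h => closure_mono (biUnion_subset_biUnion_left (Ici_subset_Ici.2 h))

lemma biUnion_image_subset_image_of_absorbing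
    (hSsem : ∀ t s : ℝ, 0 ≤ t → 0 ≤ s → S (t + s) = S t ∘ S s) {B B₀ : Set X} {T τ : ℝ}
    (hT : 0 ≤ T) (hτ : 0 ≤ τ) (habs : ∀ t, T ≤ t → S t '' B ⊆ B₀) :
    ⋃ t ∈ Ici (T + τ), S t '' B ⊆ S τ '' B₀ := by
  intro y hy
  obtain ⟨t, ht, x, hx, rfl⟩ := mem_iUnion₂.1 hy
  rw [mem_Ici] at ht
  have hsplit : S t = S τ ∘ S (t - τ) := by
    rw [← hSsem τ (t - τ) hτ (by linarith), add_sub_cancel]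
  rw [hsplit]
  exact mem_image_of_mem _ (habs (t - τ) (by linarith) (mem_image_of_mem _ hx))

lemma exists_finset_closure_biUnion_image_subset [MetricSpace X]
    (hSsem : ∀ t s : ℝ, 0 ≤ t → 0 ≤ s → S (t + s) = S t ∘ S s) {B B₀ : Set X}
    (hB₀ : Bornology.IsBounded B₀) {T T₀ : ℝ} (hT : 0 ≤ T)
    (habs : ∀ t, T ≤ t → S t '' B ⊆ B₀) (habs₀ : ∀ t, T₀ ≤ t → S t '' B₀ ⊆ B₀)
    (hkur : Tendsto (fun t => kuratowskiMeasure (S t '' B₀)) atTop (nhds 0))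
    {ε : ℝ} (hε : 0 < ε) :
    ∃ n : ℕ, ∃ c : Finset X, closure (⋃ t ∈ Ici (T + n), S t '' B) ⊆ ⋃ x ∈ c, ball x ε := by
  obtain ⟨τ, ⟨hτε, hτT₀⟩, hτ⟩ := (((hkur.eventually (gt_mem_nhds hε)).and
    (eventually_ge_atTop T₀)).and (eventually_ge_atTop 0)).exists
  obtain ⟨c, hc⟩ :=
    exists_finset_closure_subset_of_kuratowskiMeasure_lt (hB₀.subset (habs₀ τ hτT₀)) hτε
  have hle : T + τ ≤ T + ⌈τ⌉₊ := by linarith [Nat.le_ceil τ]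
  refine ⟨⌈τ⌉₊, c, (antitone_closure_biUnion_image (S := S) B hle).trans ?_⟩
  exact (closure_mono (biUnion_image_subset_image_of_absorbing hSsem hT hτ habs)).trans hc

end Semiflow

theorem stmt17_general {X : Type*} [NormedAddCommGroup X] [CompleteSpace X]
    (S : ℝ → X → X)
    (hSsem : ∀ t s : ℝ, 0 ≤ t → 0 ≤ s → S (t + s) = S t ∘ S s)
    (hdiss : ∃ B₀ : Set X, Bornology.IsBounded B₀ ∧
      ∀ B : Set X, Bornology.IsBounded B → ∃ T : ℝ, ∀ t, T ≤ t → S t '' B ⊆ B₀)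
    (hkur : ∀ B : Set X, Bornology.IsBounded B →
      Filter.Tendsto (fun t => kuratowskiMeasure (S t '' B)) Filter.atTop (nhds 0)) :
    ∀ B : Set X, Bornology.IsBounded B → B.Nonempty →
      (⋂ τ ∈ Set.Ici (0:ℝ), closure (⋃ t ∈ Set.Ici τ, S t '' B)).Nonempty ∧
      IsCompact (⋂ τ ∈ Set.Ici (0:ℝ), closure (⋃ t ∈ Set.Ici τ, S t '' B)) ∧
      ∀ ε : ℝ, 0 < ε → ∃ T : ℝ, ∀ t, T ≤ t → ∀ x ∈ B,
        Metric.infDist (S t x)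
          (⋂ τ ∈ Set.Ici (0:ℝ), closure (⋃ t ∈ Set.Ici τ, S t '' B)) < ε := by
  intro B hB ⟨x₀, hx₀⟩
  obtain ⟨B₀, hB₀, habs⟩ := hdiss
  obtain ⟨T₁, hT₁⟩ := habs B hB
  obtain ⟨T₀, hT₀⟩ := habs B₀ hB₀
  set T := max T₁ 0
  have hT : 0 ≤ T := le_max_right _ _
  have habsT : ∀ t, T ≤ t → S t '' B ⊆ B₀ := fun t ht => hT₁ t ((le_max_left _ _).trans ht)
  set G : ℕ → Set X := fun n => closure (⋃ t ∈ Ici (T + n), S t '' B)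
  have hG : Antitone G := fun m n h =>
    antitone_closure_biUnion_image B (by gcongr : T + (m : ℝ) ≤ T + n)
  have hclosed : ∀ n, IsClosed (G n) := fun n => isClosed_closure
  have hcov : ∀ ε > 0, ∃ n, ∃ c : Finset X, G n ⊆ ⋃ x ∈ c, ball x ε := fun ε hε =>
    exists_finset_closure_biUnion_image_subset hSsem hB₀ hT habsT hT₀ (hkur B₀ hB₀) hε
  have hne : (⋂ n, G n).Nonempty := nonempty_iInter_of_forall_exists_finset_subset hcov hG hclosed
    fun n => ⟨_, subset_closure (mem_biUnion self_mem_Ici (mem_image_of_mem _ hx₀))⟩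
  rw [biInter_Ici_zero_eq_iInter_nat (antitone_closure_biUnion_image B) hT]
  refine ⟨hne, isCompact_iInter_of_forall_exists_finset_subset hcov hclosed, fun ε hε => ?_⟩
  obtain ⟨n, hn⟩ :=
    exists_subset_thickening_iInter_of_forall_exists_finset_subset hcov hG hclosed hε
  refine ⟨T + n, fun t ht x hx => (mem_thickening_iff_infDist_lt hne).1 (hn ?_)⟩
  exact subset_closure (mem_biUnion ht (mem_image_of_mem _ hx))

/-- Abstract attractor-existence criterion: a dissipative Lipschitz semigroup
whose images of bounded sets have Kuratowski measure tending to `0` admits, for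
every nonempty bounded set `B`, a nonempty compact attracting `ω`-limit set. -/
theorem stmt17 {X : Type*} [NormedAddCommGroup X] [NormedSpace ℝ X] [CompleteSpace X]
    (S : ℝ → X → X)
    (hS0 : S 0 = id)
    (hSsem : ∀ t s : ℝ, 0 ≤ t → 0 ≤ s → S (t + s) = S t ∘ S s)
    (hLip : ∀ t : ℝ, 0 ≤ t → ∃ L : NNReal, LipschitzWith L (S t))
    (hdiss : ∃ B₀ : Set X, Bornology.IsBounded B₀ ∧
      ∀ B : Set X, Bornology.IsBounded B → ∃ T : ℝ, ∀ t, T ≤ t → S t '' B ⊆ B₀)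
    (hkur : ∀ B : Set X, Bornology.IsBounded B →
      Filter.Tendsto (fun t => kuratowskiMeasure (S t '' B)) Filter.atTop (nhds 0)) :
    ∀ B : Set X, Bornology.IsBounded B → B.Nonempty →
      (⋂ τ ∈ Set.Ici (0:ℝ), closure (⋃ t ∈ Set.Ici τ, S t '' B)).Nonempty ∧
      IsCompact (⋂ τ ∈ Set.Ici (0:ℝ), closure (⋃ t ∈ Set.Ici τ, S t '' B)) ∧
      ∀ ε : ℝ, 0 < ε → ∃ T : ℝ, ∀ t, T ≤ t → ∀ x ∈ B,
        Metric.infDist (S t x)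
          (⋂ τ ∈ Set.Ici (0:ℝ), closure (⋃ t ∈ Set.Ici τ, S t '' B)) < ε :=
  stmt17_general S hSsem hdiss hkur
end
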